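/- arXiv:2306.06681 — 4 statements merged into one kernel-verified Lean document; each statement's English description precedes it below -/
import Mathlib

section
/- Let n > 0, x > 0, δ ∈ ℝ and y = x²/(n+x²). Then P_n(x;δ) = (e^{-δ²/2}/(2 B(1/2, n/2))) ∫₀^y t^{-1/2} (1-t)^{n/2-1} ₁F₁((n+1)/2; 1/2; δ²t/2) dt. -/
open Real MeasureTheory

/-- Complementary error function. -/
noncomputable def erfc (z : ℝ) : ℝ := (2 / Real.sqrt π) * ∫ t in Set.Ioi z, Real.exp (-t^2)

/-- Error function. -/
noncomputable def erf (z : ℝ) : ℝ := 1 - erfc z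

/-- Beta function B(a,b) = Γ(a)Γ(b)/Γ(a+b). -/
noncomputable def betaFn (a b : ℝ) : ℝ := Real.Gamma a * Real.Gamma b / Real.Gamma (a + b)

/-- Regularized incomplete beta function I_y(a,b). -/
noncomputable def regIncBeta (y a b : ℝ) : ℝ :=
  (1 / betaFn a b) * ∫ t in (0:ℝ)..y, t ^ (a - 1) * (1 - t) ^ (b - 1)

/-- The function P_n(x;δ). -/
noncomputable def Pnt (n x δ : ℝ) : ℝ :=
  (1/2) * Real.exp (-δ^2/2) *
    ∑' j : ℕ, ((δ^2/2)^j / (Nat.factorial j : ℝ)) *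
      regIncBeta (x^2/(n + x^2)) ((j : ℝ) + 1/2) (n/2)

/-- The function Q_n(x;δ). -/
noncomputable def Qnt (n x δ : ℝ) : ℝ :=
  (1/2) * Real.exp (-δ^2/2) *
    ∑' j : ℕ, (δ / Real.sqrt 2) * ((δ^2/2)^j / Real.Gamma ((j : ℝ) + 3/2)) *
      regIncBeta (x^2/(n + x^2)) ((j : ℝ) + 1) (n/2)

/-- The noncentral t cumulative distribution function F_n(x;δ). -/
noncomputable def Fnt (n x δ : ℝ) : ℝ :=
  (1/2) * erfc (δ / Real.sqrt 2) + Pnt n x δ + Qnt n x δ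

/-- The function R_n(x;δ) = erfc(δ/√2)/2 + Q_n(x;δ) − P_n(x;δ). -/
noncomputable def Rnt (n x δ : ℝ) : ℝ :=
  (1/2) * erfc (δ / Real.sqrt 2) + Qnt n x δ - Pnt n x δ

/-- Kummer's confluent hypergeometric function ₁F₁(a;b;z). -/
noncomputable def kummerM (a b z : ℝ) : ℝ :=
  ∑' k : ℕ, (Real.Gamma (a + k) / Real.Gamma a) / (Real.Gamma (b + k) / Real.Gamma b) *
    z^k / (Nat.factorial k : ℝ)


lemma betaFn_pos {a b : ℝ} (ha : 0 < a) (hb : 0 < b) : 0 < betaFn a b :=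
  div_pos (mul_pos (Real.Gamma_pos_of_pos ha) (Real.Gamma_pos_of_pos hb))
    (Real.Gamma_pos_of_pos (by linarith))

lemma beta_intervalIntegrable {a b : ℝ} (ha : 0 < a) (hb : 0 < b) :
    IntervalIntegrable (fun t : ℝ => t ^ (a - 1) * (1 - t) ^ (b - 1)) volume 0 1 := by
  have hC := Complex.betaIntegral_convergent (u := (a : ℂ)) (v := (b : ℂ))
    (by simpa using ha) (by simpa using hb)
  rw [intervalIntegrable_iff_integrableOn_Ioc_of_le (by norm_num)] at hC ⊢
  have := hC.re
  refine this.congr ((ae_restrict_iff' measurableSet_Ioc).mpr (ae_of_all _ fun t ht => ?_))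
  simp only
  rw [show ((a:ℂ) - 1) = ((a - 1 : ℝ) : ℂ) by push_cast; ring,
    show ((b:ℂ) - 1) = ((b - 1 : ℝ) : ℂ) by push_cast; ring,
    show (1 - (t:ℂ)) = ((1 - t : ℝ) : ℂ) by push_cast; ring,
    ← Complex.ofReal_cpow ht.1.le, ← Complex.ofReal_cpow (by simp; linarith [ht.2] : (0:ℝ) ≤ 1 - t),
    ← Complex.ofReal_mul]
  simp

lemma beta_integral_eval {a b : ℝ} (ha : 0 < a) (hb : 0 < b) :
    ∫ t in (0:ℝ)..1, t ^ (a - 1) * (1 - t) ^ (b - 1) = betaFn a b := by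
  have key := Complex.Gamma_mul_Gamma_eq_betaIntegral (s := (a : ℂ)) (t := (b : ℂ))
    (by simpa using ha) (by simpa using hb)
  have hI : Complex.betaIntegral (a : ℂ) (b : ℂ) =
      ((∫ t in (0:ℝ)..1, t ^ (a - 1) * (1 - t) ^ (b - 1) : ℝ) : ℂ) := by
    rw [Complex.betaIntegral, ← intervalIntegral.integral_ofReal]
    refine intervalIntegral.integral_congr fun t ht => ?_
    rw [Set.uIcc_of_le (by norm_num : (0:ℝ) ≤ 1)] at ht
    rw [show ((a:ℂ) - 1) = ((a - 1 : ℝ) : ℂ) by push_cast; ring,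
      show ((b:ℂ) - 1) = ((b - 1 : ℝ) : ℂ) by push_cast; ring,
      show (1 - (t:ℂ)) = ((1 - t : ℝ) : ℂ) by push_cast; ring,
      ← Complex.ofReal_cpow ht.1, ← Complex.ofReal_cpow (by linarith [ht.2] : (0:ℝ) ≤ 1 - t),
      ← Complex.ofReal_mul]
  rw [hI, ← Complex.ofReal_add, Complex.Gamma_ofReal, Complex.Gamma_ofReal,
    Complex.Gamma_ofReal, ← Complex.ofReal_mul, ← Complex.ofReal_mul] at key
  have := Complex.ofReal_inj.mp key
  have hG : Real.Gamma (a + b) ≠ 0 := (Real.Gamma_pos_of_pos (by linarith)).ne'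
  rw [betaFn, this, mul_comm, mul_div_assoc, div_self hG, mul_one]

lemma beta_partial_nonneg {a b y : ℝ} (hy0 : 0 ≤ y) (hy1 : y ≤ 1) :
    0 ≤ ∫ t in (0:ℝ)..y, t ^ (a - 1) * (1 - t) ^ (b - 1) := by
  refine intervalIntegral.integral_nonneg hy0 fun t ht => ?_
  exact mul_nonneg (Real.rpow_nonneg ht.1 _)
    (Real.rpow_nonneg (by linarith [ht.2] : (0:ℝ) ≤ 1 - t) _)

lemma beta_partial_le {a b y : ℝ} (ha : 0 < a) (hb : 0 < b) (hy0 : 0 ≤ y) (hy1 : y ≤ 1) :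
    ∫ t in (0:ℝ)..y, t ^ (a - 1) * (1 - t) ^ (b - 1) ≤ betaFn a b := by
  rw [← beta_integral_eval ha hb]
  refine intervalIntegral.integral_mono_interval le_rfl hy0 hy1 ?_ (beta_intervalIntegrable ha hb)
  refine (ae_restrict_iff' measurableSet_Ioc).mpr (ae_of_all _ fun t ht => ?_)
  exact mul_nonneg (Real.rpow_nonneg ht.1.le _) (Real.rpow_nonneg (by linarith [ht.2]) _)

theorem Pnt_integral_rep (n x δ : ℝ) (hn : 0 < n) (hx : 0 < x)
    (y : ℝ) (hy : y = x^2 / (n + x^2)) :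
    Pnt n x δ =
      (Real.exp (-δ^2/2) / (2 * betaFn (1/2) (n/2))) *
        ∫ t in (0:ℝ)..y,
          t ^ (-(1:ℝ)/2) * (1 - t) ^ (n/2 - 1) * kummerM ((n+1)/2) (1/2) (δ^2 * t / 2) := by
  have hnx : 0 < n + x^2 := by positivity
  have hy0 : 0 < y := hy ▸ div_pos (pow_pos hx 2) hnx
  have hy1 : y < 1 := by rw [hy, div_lt_one hnx]; nlinarith
  have hn2 : 0 < n / 2 := by linarith
  have haj : ∀ j : ℕ, (0:ℝ) < (j:ℝ) + 1/2 := fun j => by positivity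
  have hBj : ∀ j : ℕ, 0 < betaFn ((j:ℝ) + 1/2) (n/2) := fun j => betaFn_pos (haj j) hn2
  have hB0 : 0 < betaFn (1/2) (n/2) := betaFn_pos (by norm_num) hn2
  -- constants and functions
  set C : ℕ → ℝ := fun j => (δ^2/2)^j / (Nat.factorial j : ℝ) * (1 / betaFn ((j:ℝ) + 1/2) (n/2))
    with hC
  have hCnn : ∀ j, 0 ≤ C j := fun j =>
    mul_nonneg (by positivity) (one_div_pos.mpr (hBj j)).le
  set f : ℕ → ℝ → ℝ := fun j t => t ^ ((j:ℝ) + 1/2 - 1) * (1 - t) ^ (n/2 - 1) with hf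
  -- integrability facts
  have hfint : ∀ j : ℕ, IntervalIntegrable (f j) volume 0 y := fun j =>
    (beta_intervalIntegrable (haj j) hn2).mono_set (by
      rw [Set.uIcc_of_le hy0.le, Set.uIcc_of_le zero_le_one]
      exact Set.Icc_subset_Icc le_rfl hy1.le)
  have hgint : ∀ j : ℕ, IntegrableOn (fun t => C j * f j t) (Set.Ioc 0 y) volume := fun j => by
    have := (hfint j).const_mul (C j)
    rwa [intervalIntegrable_iff_integrableOn_Ioc_of_le hy0.le] at this
  have hgnn : ∀ j : ℕ, 0 ≤ᵐ[volume.restrict (Set.Ioc 0 y)] fun t => C j * f j t := fun j =>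
    (ae_restrict_iff' measurableSet_Ioc).mpr (ae_of_all _ fun t ht =>
      mul_nonneg (hCnn j) (mul_nonneg (Real.rpow_nonneg ht.1.le _)
        (Real.rpow_nonneg (by linarith [ht.2, hy1] : (0:ℝ) ≤ 1 - t) _)))
  have hfnn : ∀ j : ℕ, 0 ≤ ∫ t in (0:ℝ)..y, f j t :=
    fun j => beta_partial_nonneg hy0.le hy1.le
  have hfle : ∀ j : ℕ, ∫ t in (0:ℝ)..y, f j t ≤ betaFn ((j:ℝ) + 1/2) (n/2) :=
    fun j => beta_partial_le (haj j) hn2 hy0.le hy1.le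
  -- lintegral computation
  have hlin : ∀ j : ℕ, ∫⁻ t in Set.Ioc (0:ℝ) y, ‖C j * f j t‖₊ ∂volume
      = ENNReal.ofReal (∫ t in Set.Ioc (0:ℝ) y, C j * f j t) := fun j => by
    rw [ofReal_integral_eq_lintegral_ofReal (hgint j) (hgnn j)]
    refine lintegral_congr_ae ((hgnn j).mono fun t ht => ?_)
    exact Real.enorm_eq_ofReal ht
  have hIoc : ∀ j : ℕ, ∫ t in Set.Ioc (0:ℝ) y, C j * f j t
      = C j * ∫ t in (0:ℝ)..y, f j t := fun j => by
    rw [integral_const_mul, intervalIntegral.integral_of_le hy0.le]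
  -- summability of the lintegrals
  have hsum : (∑' j : ℕ, ∫⁻ t in Set.Ioc (0:ℝ) y, ‖C j * f j t‖₊ ∂volume) ≠ ⊤ := by
    have hle : ∀ j : ℕ, ENNReal.ofReal (∫ t in Set.Ioc (0:ℝ) y, C j * f j t)
        ≤ ENNReal.ofReal ((δ^2/2)^j / (Nat.factorial j : ℝ)) := fun j => by
      refine ENNReal.ofReal_le_ofReal ?_
      rw [hIoc j]
      calc C j * ∫ t in (0:ℝ)..y, f j t ≤ C j * betaFn ((j:ℝ) + 1/2) (n/2) :=
            mul_le_mul_of_nonneg_left (hfle j) (hCnn j)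
        _ = (δ^2/2)^j / (Nat.factorial j : ℝ) := by
            rw [hC]
            simp only
            rw [mul_assoc, one_div_mul_cancel (hBj j).ne', mul_one]
    refine ne_top_of_le_ne_top (b := ENNReal.ofReal (∑' j : ℕ, (δ^2/2)^j / (Nat.factorial j : ℝ)))
      ENNReal.ofReal_ne_top ?_
    rw [ENNReal.ofReal_tsum_of_nonneg (fun j => by positivity)
      (Real.summable_pow_div_factorial _)]
    simp_rw [hlin]
    exact ENNReal.tsum_le_tsum hle
  -- interchange of sum and integral
  have hinter := MeasureTheory.integral_tsum (μ := volume.restrict (Set.Ioc (0:ℝ) y))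
    (f := fun j t => C j * f j t) (fun j => (hgint j).1) hsum
  -- pointwise identity
  have hpt : Set.EqOn
      (fun t : ℝ => (1 / betaFn (1/2) (n/2)) *
        (t ^ (-(1:ℝ)/2) * (1 - t) ^ (n/2 - 1) * kummerM ((n+1)/2) (1/2) (δ^2 * t / 2)))
      (fun t : ℝ => ∑' j : ℕ, C j * f j t) (Set.Ioc 0 y) := by
    intro t ht
    simp only
    rw [kummerM, ← tsum_mul_left, ← tsum_mul_left]
    refine tsum_congr fun k => ?_
    have hG1 : Real.Gamma ((k:ℝ) + 1/2) ≠ 0 := (Real.Gamma_pos_of_pos (haj k)).ne'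
    have hG2 : Real.Gamma (n/2) ≠ 0 := (Real.Gamma_pos_of_pos hn2).ne'
    have hG3 : Real.Gamma ((k:ℝ) + 1/2 + n/2) ≠ 0 :=
      (Real.Gamma_pos_of_pos (by have := haj k; linarith)).ne'
    have hG4 : Real.Gamma (1/2 : ℝ) ≠ 0 := (Real.Gamma_pos_of_pos (by norm_num)).ne'
    have hG5 : Real.Gamma ((n+1)/2) ≠ 0 := (Real.Gamma_pos_of_pos (by linarith)).ne'
    have hG6 : Real.Gamma (1/2 + n/2) ≠ 0 := (Real.Gamma_pos_of_pos (by linarith)).ne'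
    have hfact : (Nat.factorial k : ℝ) ≠ 0 := Nat.cast_ne_zero.mpr (Nat.factorial_ne_zero k)
    have ht1 : t ^ ((k:ℝ) + 1/2 - 1) = t ^ (k : ℕ) * t ^ (-(1:ℝ)/2) := by
      rw [show ((k:ℝ) + 1/2 - 1) = (k:ℝ) + (-(1:ℝ)/2) by ring, Real.rpow_add ht.1,
        Real.rpow_natCast]
    have ht2 : (δ^2 * t / 2)^k = (δ^2/2)^k * t^k := by
      rw [← mul_pow]; ring_nf
    rw [hC, hf]
    simp only
    rw [show (n+1)/2 + (k:ℝ) = ((k:ℝ) + 1/2) + n/2 by ring,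
      show (1/2 : ℝ) + (k:ℝ) = (k:ℝ) + 1/2 by ring, ht1, ht2, betaFn, betaFn]
    field_simp
    ring_nf
  -- assemble
  rw [Pnt]
  rw [intervalIntegral.integral_of_le hy0.le]
  have key : (1 / betaFn (1/2) (n/2)) * ∫ t in Set.Ioc (0:ℝ) y,
      t ^ (-(1:ℝ)/2) * (1 - t) ^ (n/2 - 1) * kummerM ((n+1)/2) (1/2) (δ^2 * t / 2)
      = ∑' j : ℕ, C j * ∫ t in (0:ℝ)..y, f j t := by
    rw [← integral_const_mul, setIntegral_congr_fun measurableSet_Ioc hpt, hinter]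
    exact tsum_congr hIoc
  calc (1/2) * Real.exp (-δ^2/2) *
      ∑' j : ℕ, ((δ^2/2)^j / (Nat.factorial j : ℝ)) * regIncBeta (x^2/(n + x^2)) ((j:ℝ) + 1/2) (n/2)
      = (Real.exp (-δ^2/2) / 2) * ∑' j : ℕ, C j * ∫ t in (0:ℝ)..y, f j t := by
        rw [mul_comm ((1:ℝ)/2), mul_one_div]
        congr 1
        refine tsum_congr fun j => ?_
        rw [regIncBeta, ← hy, hC, hf]
        ring
    _ = (Real.exp (-δ^2/2) / (2 * betaFn (1/2) (n/2))) * ∫ t in Set.Ioc (0:ℝ) y,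
          t ^ (-(1:ℝ)/2) * (1 - t) ^ (n/2 - 1) * kummerM ((n+1)/2) (1/2) (δ^2 * t / 2) := by
        rw [← key]
        field_simp
end

section
/- Let n > 0, x > 0, δ ∈ ℝ and y = x²/(n+x²). Then Q_n(x;δ) = (δ n e^{-δ²/2}/(2√(2π))) ∫₀^y (1-t)^{n/2-1} ₁F₁(n/2+1; 3/2; δ²t/2) dt. -/
open Real MeasureTheory

/-!
Expand the Kummer function in its power series and integrate term by term: on `[0, y]` with
`y < 1` the `k`-th term of `(1 - t) ^ p * ₁F₁(a; b; z t)` is at most the `k`-th coefficient times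
`(1 - t) ^ p`, and for `a, b ≥ 1` the coefficients are dominated by those of `exp (a z)`, so
dominated convergence applies. Each resulting integral `∫₀^y t ^ j (1 - t) ^ (n/2 - 1)` is an
incomplete beta integral, and the coefficients match those of `Q_n` by
`B(j + 1, n/2) = j! Γ(n/2) / Γ(j + 1 + n/2)` and `Γ(3/2) = √π / 2`.
-/

open scoped Nat

lemma Real.Gamma_three_div_two : Gamma (3 / 2) = √π / 2 := by
  rw [show (3 : ℝ) / 2 = 1 / 2 + 1 by norm_num, Gamma_add_one (by norm_num), Gamma_one_half_eq]
  ring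

lemma one_div_betaFn_nat_add_one {b : ℝ} (hb : 0 < b) (j : ℕ) :
    1 / betaFn (j + 1) b = b * (Gamma (b + 1 + j) / Gamma (b + 1)) / j ! := by
  have hΓb : Gamma b ≠ 0 := (Gamma_pos_of_pos hb).ne'
  rw [betaFn, Gamma_nat_eq_factorial, Gamma_add_one hb.ne', add_comm (j : ℝ)]
  field_simp
  ring_nf

noncomputable def kummerTerm (a b z : ℝ) (k : ℕ) : ℝ :=
  (Gamma (a + k) / Gamma a) / (Gamma (b + k) / Gamma b) * z ^ k / k !

section kummerTerm

variable {a b z : ℝ}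

lemma kummerTerm_nonneg (ha : 0 < a) (hb : 0 < b) (hz : 0 ≤ z) (k : ℕ) :
    0 ≤ kummerTerm a b z k := by
  have := Gamma_pos_of_pos ha
  have := Gamma_pos_of_pos hb
  have : 0 < Gamma (a + k) := Gamma_pos_of_pos (by positivity)
  have : 0 < Gamma (b + k) := Gamma_pos_of_pos (by positivity)
  unfold kummerTerm
  positivity

lemma kummerTerm_mul (a b z t : ℝ) (k : ℕ) :
    kummerTerm a b (z * t) k = kummerTerm a b z k * t ^ k := by
  unfold kummerTerm
  rw [mul_pow]
  ring

lemma Gamma_add_nat_ratio_le (ha : 1 ≤ a) (hb : 1 ≤ b) (k : ℕ) :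
    (Gamma (a + k) / Gamma a) / (Gamma (b + k) / Gamma b) ≤ a ^ k := by
  induction k with
  | zero => simp [(Gamma_pos_of_pos (show 0 < a by linarith)).ne',
      (Gamma_pos_of_pos (show 0 < b by linarith)).ne']
  | succ k ih =>
    have Gamma_succ : ∀ c : ℝ, 0 < c → Gamma (c + (k + 1 : ℕ)) = (c + k) * Gamma (c + k) :=
      fun c hc ↦ by rw [Nat.cast_succ, ← add_assoc, Gamma_add_one (by positivity)]
    have hak : 0 < a + k := by positivity
    have hbk : 0 < b + k := by positivity
    have := Gamma_pos_of_pos (show 0 < a by linarith)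
    have := Gamma_pos_of_pos (show 0 < b by linarith)
    have := Gamma_pos_of_pos hak
    have := Gamma_pos_of_pos hbk
    have step : (a + k) / (b + k) ≤ a := by
      rw [div_le_iff₀ hbk]
      nlinarith
    calc (Gamma (a + (k + 1 : ℕ)) / Gamma a) / (Gamma (b + (k + 1 : ℕ)) / Gamma b)
        = (a + k) / (b + k) * ((Gamma (a + k) / Gamma a) / (Gamma (b + k) / Gamma b)) := by
          rw [Gamma_succ a (by linarith), Gamma_succ b (by linarith)]
          field_simp
      _ ≤ a * a ^ k := by gcongr
      _ = a ^ (k + 1) := by ring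

lemma kummerTerm_le (ha : 1 ≤ a) (hb : 1 ≤ b) (hz : 0 ≤ z) (k : ℕ) :
    kummerTerm a b z k ≤ (a * z) ^ k / k ! := by
  rw [kummerTerm, mul_pow]
  gcongr
  exact Gamma_add_nat_ratio_le ha hb k

lemma summable_kummerTerm (ha : 1 ≤ a) (hb : 1 ≤ b) (hz : 0 ≤ z) :
    Summable (kummerTerm a b z) :=
  (summable_pow_div_factorial (a * z)).of_nonneg_of_le
    (kummerTerm_nonneg (by linarith) (by linarith) hz) (kummerTerm_le ha hb hz)

lemma hasSum_integral_rpow_mul_kummerM (ha : 1 ≤ a) (hb : 1 ≤ b) (hz : 0 ≤ z) {y : ℝ}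
    (hy0 : 0 ≤ y) (hy1 : y < 1) (p : ℝ) :
    HasSum (fun k : ℕ ↦ kummerTerm a b z k * ∫ t in (0 : ℝ)..y, t ^ k * (1 - t) ^ p)
      (∫ t in (0 : ℝ)..y, (1 - t) ^ p * kummerM a b (z * t)) := by
  have hIoc : Set.uIoc 0 y = Set.Ioc 0 y := Set.uIoc_of_le hy0
  simp_rw [← intervalIntegral.integral_const_mul]
  refine intervalIntegral.hasSum_integral_of_dominated_convergence
    (fun k t ↦ kummerTerm a b z k * (1 - t) ^ p) (fun k ↦ ?_) (fun k ↦ ?_) ?_ ?_ ?_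
  · exact (by fun_prop : Measurable fun t : ℝ ↦ kummerTerm a b z k * (t ^ k * (1 - t) ^ p))
      |>.aestronglyMeasurable
  · refine Filter.Eventually.of_forall fun t ht ↦ ?_
    rw [hIoc] at ht
    have h1t : 0 < 1 - t := by linarith [ht.2]
    have hk := kummerTerm_nonneg (show 0 < a by linarith) (show 0 < b by linarith) hz k
    have htk : t ^ k ≤ 1 := pow_le_one₀ ht.1.le (by linarith [ht.2])
    rw [Real.norm_of_nonneg
      (mul_nonneg hk (mul_nonneg (pow_nonneg ht.1.le k) (rpow_nonneg h1t.le p)))]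
    gcongr
    exact mul_le_of_le_one_left (rpow_nonneg h1t.le p) htk
  · exact Filter.Eventually.of_forall fun t _ ↦
      (summable_kummerTerm ha hb hz).mul_right ((1 - t) ^ p)
  · simp_rw [tsum_mul_right]
    refine ContinuousOn.intervalIntegrable (ContinuousOn.mul continuousOn_const ?_)
    refine ContinuousOn.rpow_const (by fun_prop) fun t ht ↦ Or.inl ?_
    rw [Set.uIcc_of_le hy0] at ht
    linarith [ht.2]
  · refine Filter.Eventually.of_forall fun t ht ↦ ?_
    rw [hIoc] at ht
    have hzt : 0 ≤ z * t := mul_nonneg hz ht.1.le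
    have hterm : ∀ k : ℕ, kummerTerm a b z k * (t ^ k * (1 - t) ^ p) =
        (1 - t) ^ p * kummerTerm a b (z * t) k := fun k ↦ by
      rw [kummerTerm_mul]
      ring
    simp only [hterm]
    exact (summable_kummerTerm ha hb hzt).hasSum.mul_left ((1 - t) ^ p)

end kummerTerm

theorem Qnt_integral_rep_general (n x δ : ℝ) (hn : 0 < n)
    (y : ℝ) (hy : y = x^2 / (n + x^2)) :
    Qnt n x δ =
      (δ * n * Real.exp (-δ^2/2) / (2 * Real.sqrt (2 * π))) *
        ∫ t in (0:ℝ)..y, (1 - t) ^ (n/2 - 1) * kummerM (n/2 + 1) (3/2) (δ^2 * t / 2) := by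
  have hy0 : 0 ≤ y := hy ▸ by positivity
  have hy1 : y < 1 := by
    rw [hy, div_lt_one (by positivity)]
    linarith
  have hseries := hasSum_integral_rpow_mul_kummerM (a := n / 2 + 1) (b := 3 / 2)
    (z := δ ^ 2 / 2) (by linarith) (by norm_num) (by positivity) hy0 hy1 (n / 2 - 1)
  simp_rw [show ∀ t, δ ^ 2 * t / 2 = δ ^ 2 / 2 * t from fun t ↦ by ring]
  rw [← hseries.tsum_eq, ← tsum_mul_left, Qnt, ← hy, ← tsum_mul_left]
  refine tsum_congr fun j ↦ ?_
  rw [regIncBeta, one_div_betaFn_nat_add_one (by positivity), kummerTerm, Gamma_three_div_two,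
    Gamma_add_one (by positivity), add_sub_cancel_right]
  simp_rw [Real.rpow_natCast]
  have hΓn := Gamma_pos_of_pos (show 0 < n / 2 by positivity)
  have hΓj := Gamma_pos_of_pos (show 0 < 3 / 2 + (j : ℝ) by positivity)
  rw [show (j : ℝ) + 3 / 2 = 3 / 2 + j by ring, Real.sqrt_mul (by norm_num)]
  field_simp

theorem Qnt_integral_rep (n x δ : ℝ) (hn : 0 < n) (hx : 0 < x)
    (y : ℝ) (hy : y = x^2 / (n + x^2)) :
    Qnt n x δ =
      (δ * n * Real.exp (-δ^2/2) / (2 * Real.sqrt (2 * π))) *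
        ∫ t in (0:ℝ)..y, (1 - t) ^ (n/2 - 1) * kummerM (n/2 + 1) (3/2) (δ^2 * t / 2) :=
  Qnt_integral_rep_general n x δ hn y hy
end

section
/- Let n > 0, x ≥ 0 and δ ∈ ℝ. Then F_n(x;−δ) = 1 − R_n(x;δ), where F_n(x;−δ) denotes the noncentral t distribution with noncentrality parameter −δ. -/
open Real MeasureTheory

lemma erfc_neg (z : ℝ) : erfc (-z) = 2 - erfc z := by
  have hint : Integrable (fun t : ℝ => Real.exp (-t^2)) := by
    have := integrable_exp_neg_mul_sq (b := 1) one_pos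
    simpa using this
  have h1 : (∫ t in Set.Ioi (-z), Real.exp (-t^2)) = ∫ t in Set.Iic z, Real.exp (-t^2) := by
    have h := integral_comp_neg_Ioi (-z) (fun t => Real.exp (-t^2))
    simpa using h
  have h2 : (∫ t in Set.Iic z, Real.exp (-t^2)) + (∫ t in Set.Ioi z, Real.exp (-t^2))
      = ∫ t : ℝ, Real.exp (-t^2) := intervalIntegral.integral_Iic_add_Ioi hint.integrableOn hint.integrableOn
  have htot : (∫ t : ℝ, Real.exp (-t^2)) = Real.sqrt π := by
    have := integral_gaussian 1
    simpa using this
  have hpi : Real.sqrt π ≠ 0 := by positivity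
  unfold erfc
  rw [h1]
  have : (∫ t in Set.Iic z, Real.exp (-t^2)) = Real.sqrt π - ∫ t in Set.Ioi z, Real.exp (-t^2) := by
    linarith [h2, htot]
  rw [this]
  field_simp

lemma Pnt_neg (n x δ : ℝ) : Pnt n x (-δ) = Pnt n x δ := by
  simp [Pnt, neg_sq]

lemma Qnt_neg (n x δ : ℝ) : Qnt n x (-δ) = -Qnt n x δ := by
  unfold Qnt
  rw [neg_sq]
  have : (∑' j : ℕ, -δ / Real.sqrt 2 * ((δ^2/2)^j / Real.Gamma ((j : ℝ) + 3/2)) *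
      regIncBeta (x^2/(n + x^2)) ((j : ℝ) + 1) (n/2))
      = -∑' j : ℕ, δ / Real.sqrt 2 * ((δ^2/2)^j / Real.Gamma ((j : ℝ) + 3/2)) *
      regIncBeta (x^2/(n + x^2)) ((j : ℝ) + 1) (n/2) := by
    rw [← tsum_neg]; exact tsum_congr fun j => by ring
  rw [this]; ring

theorem Fnt_neg_delta (n x δ : ℝ) (hn : 0 < n) (hx : 0 ≤ x) :
    Fnt n x (-δ) = 1 - Rnt n x δ := by
  unfold Fnt Rnt
  rw [Pnt_neg, Qnt_neg, show -δ / Real.sqrt 2 = -(δ / Real.sqrt 2) by ring, erfc_neg]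
  ring
end

section
/- Let n > 0, x > 0, δ ∈ ℝ and y = x²/(n+x²). Then R_n(x;δ) = (1/2) e^{-δ²/2} Σ_{j=0}^∞ (−δ/√2)^j / Γ(j/2 + 1) · I_{1−y}(n/2, (1+j)/2). -/
open Real MeasureTheory

/-!
Write `z = δ/√2` and split the series by the parity of `j`. By the reflection
`I_{1-y}(b, a) = 1 - I_y(a, b)`, the even terms sum to `e^{z²}` minus the series defining `P_n`,
and the odd terms to `-∑ₖ z^{2k+1}/Γ(k+3/2)` plus the series defining `Q_n`. That last power
series equals `e^{z²} erf z`, since both sides vanish at `0` and solve `f' = 2/√π + 2zf`.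
Together with `erf = 1 - erfc`, this is the claimed identity.
-/

open intervalIntegral Nat

section IncompleteBeta

variable {a b y : ℝ}

lemma betaIntegrand_ofReal (a b : ℝ) {t : ℝ} (ht : t ∈ Set.Icc (0:ℝ) 1) :
    (t : ℂ) ^ ((a : ℂ) - 1) * (1 - (t : ℂ)) ^ ((b : ℂ) - 1)
      = ((t ^ (a - 1) * (1 - t) ^ (b - 1) : ℝ) : ℂ) := by
  rw [Complex.ofReal_mul, Complex.ofReal_cpow ht.1, Complex.ofReal_cpow (sub_nonneg.2 ht.2)]
  push_cast
  rfl

lemma intervalIntegrable_beta_integrand (ha : 0 < a) (hb : 0 < b) :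
    IntervalIntegrable (fun t : ℝ => t ^ (a - 1) * (1 - t) ^ (b - 1)) volume 0 1 := by
  have h := intervalIntegrable_iff.mp
    (Complex.betaIntegral_convergent (u := a) (v := b) (by simpa) (by simpa))
  refine intervalIntegrable_iff.mpr (IntegrableOn.congr_fun (Integrable.re h) (fun t ht => ?_)
    measurableSet_uIoc)
  rw [Set.uIoc_of_le zero_le_one] at ht
  simp only [betaIntegrand_ofReal a b (Set.Ioc_subset_Icc_self ht)]
  rfl

lemma integral_beta_integrand (ha : 0 < a) (hb : 0 < b) :
    ∫ t in (0:ℝ)..1, t ^ (a - 1) * (1 - t) ^ (b - 1) = betaFn a b := by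
  have h := Complex.betaIntegral_eq_Gamma_mul_div (u := a) (v := b) (by simpa) (by simpa)
  rw [Complex.betaIntegral, integral_congr fun t ht => betaIntegrand_ofReal a b
    (by rwa [Set.uIcc_of_le zero_le_one] at ht), integral_ofReal, ← Complex.ofReal_add] at h
  simp only [Complex.Gamma_ofReal] at h
  exact_mod_cast h

lemma intervalIntegrable_beta_integrand_of_mem_Icc {u v : ℝ} (ha : 0 < a) (hb : 0 < b)
    (hu : u ∈ Set.Icc (0:ℝ) 1) (hv : v ∈ Set.Icc (0:ℝ) 1) :
    IntervalIntegrable (fun t : ℝ => t ^ (a - 1) * (1 - t) ^ (b - 1)) volume u v :=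
  (intervalIntegrable_beta_integrand ha hb).mono_set <| by
    rw [Set.uIcc_of_le zero_le_one]; exact Set.uIcc_subset_Icc hu hv

lemma regIncBeta_one_sub (ha : 0 < a) (hb : 0 < b) (hy₀ : 0 ≤ y) (hy₁ : y ≤ 1) :
    regIncBeta (1 - y) b a = 1 - regIncBeta y a b := by
  set f : ℝ → ℝ := fun t => t ^ (a - 1) * (1 - t) ^ (b - 1)
  have hreflect : ∫ t in (0:ℝ)..(1 - y), t ^ (b - 1) * (1 - t) ^ (a - 1) = ∫ t in y..1, f t := by
    simpa [f, mul_comm] using integral_comp_sub_left f (a := 0) (b := 1 - y) 1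
  have hy : y ∈ Set.Icc (0:ℝ) 1 := ⟨hy₀, hy₁⟩
  have hsplit : (∫ t in (0:ℝ)..y, f t) + ∫ t in y..1, f t = betaFn a b :=
    (integral_add_adjacent_intervals
      (intervalIntegrable_beta_integrand_of_mem_Icc ha hb (by simp) hy)
      (intervalIntegrable_beta_integrand_of_mem_Icc ha hb hy (by simp))).trans
      (integral_beta_integrand ha hb)
  have hB : betaFn b a = betaFn a b := by rw [betaFn, betaFn, mul_comm, add_comm]
  have hB₀ : betaFn a b ≠ 0 := (ProbabilityTheory.beta_pos ha hb).ne'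
  rw [regIncBeta, regIncBeta, hreflect, hB]
  field_simp
  linarith

lemma regIncBeta_nonneg (ha : 0 < a) (hb : 0 < b) (hy₀ : 0 ≤ y) (hy₁ : y ≤ 1) :
    0 ≤ regIncBeta y a b := by
  refine mul_nonneg (one_div_nonneg.2 (ProbabilityTheory.beta_pos ha hb).le)
    (integral_nonneg hy₀ fun t ht => ?_)
  exact mul_nonneg (Real.rpow_nonneg ht.1 _) (Real.rpow_nonneg (by linarith [ht.2]) _)

lemma regIncBeta_le_one (ha : 0 < a) (hb : 0 < b) (hy₀ : 0 ≤ y) (hy₁ : y ≤ 1) :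
    regIncBeta y a b ≤ 1 := by
  linarith [regIncBeta_one_sub ha hb hy₀ hy₁,
    regIncBeta_nonneg hb ha (sub_nonneg.2 hy₁) (sub_le_self 1 hy₀)]

end IncompleteBeta

lemma sqrt_pi_div_two_mul_factorial_le_Gamma (k : ℕ) :
    √π / 2 * k ! ≤ Real.Gamma (k + 3 / 2) := by
  induction k with
  | zero =>
    rw [show ((0 : ℕ) : ℝ) + 3 / 2 = 1 / 2 + 1 by norm_num, Real.Gamma_add_one (by norm_num),
      Real.Gamma_one_half_eq]
    simp [div_eq_inv_mul]
  | succ k ih =>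
    rw [Nat.factorial_succ, Nat.cast_mul, Nat.cast_succ,
      show (k + 1 : ℝ) + 3 / 2 = (k + 3 / 2) + 1 by ring, Real.Gamma_add_one (by positivity)]
    calc √π / 2 * ((k + 1) * k !) = (k + 1) * (√π / 2 * k !) := by ring
      _ ≤ (k + 3 / 2) * Real.Gamma (k + 3 / 2) := by gcongr; linarith

lemma summable_div_Gamma_add_three_halves {f : ℕ → ℝ} {C w : ℝ} (hf : ∀ k, |f k| ≤ C * w ^ k) :
    Summable fun k : ℕ => f k / Real.Gamma (k + 3 / 2) := by
  refine .of_norm_bounded ((Real.summable_pow_div_factorial w).mul_left (2 / √π * C)) fun k => ?_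
  have hΓ := sqrt_pi_div_two_mul_factorial_le_Gamma k
  have hπ : 0 < √π := by positivity
  have hk : (0 : ℝ) < k ! := by positivity
  rw [Real.norm_eq_abs, abs_div, abs_of_pos (hΓ.trans_lt' (by positivity))]
  calc |f k| / Real.Gamma (k + 3 / 2) ≤ C * w ^ k / (√π / 2 * k !) :=
        div_le_div₀ ((abs_nonneg _).trans (hf k)) (hf k) (by positivity) hΓ
    _ = 2 / √π * C * (w ^ k / k !) := by field_simp

lemma integrable_exp_neg_sq : Integrable fun t : ℝ => Real.exp (-t ^ 2) := by
  simpa using integrable_exp_neg_mul_sq one_pos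

lemma erfc_zero : erfc 0 = 1 := by
  have h := integral_gaussian_Ioi 1
  simp only [neg_mul, one_mul, div_one] at h
  rw [erfc, h]
  field_simp

lemma erf_eq_integral (z : ℝ) : erf z = 2 / √π * ∫ t in (0:ℝ)..z, Real.exp (-t ^ 2) := by
  rw [erf, ← erfc_zero, erfc, erfc, ← mul_sub,
    integral_Ioi_sub_Ioi' integrable_exp_neg_sq.integrableOn
      integrable_exp_neg_sq.integrableOn]

lemma erf_zero : erf 0 = 0 := by simp [erf_eq_integral]

lemma hasDerivAt_erf (z : ℝ) : HasDerivAt erf (2 / √π * Real.exp (-z ^ 2)) z := by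
  have hc : Continuous fun t : ℝ => Real.exp (-t ^ 2) := by fun_prop
  rw [funext erf_eq_integral]
  exact (integral_hasDerivAt_right (hc.intervalIntegrable _ _)
    hc.stronglyMeasurable.stronglyMeasurableAtFilter hc.continuousAt).const_mul _

noncomputable def erfSeries (z : ℝ) : ℝ := ∑' k : ℕ, z ^ (2 * k + 1) / Real.Gamma (k + 3 / 2)

lemma summable_erfSeries (z : ℝ) :
    Summable fun k : ℕ => z ^ (2 * k + 1) / Real.Gamma (k + 3 / 2) :=
  summable_div_Gamma_add_three_halves (C := |z|) (w := z ^ 2) fun k => by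
    rw [pow_succ, pow_mul, abs_mul, abs_pow, abs_sq, mul_comm]

lemma summable_deriv_erfSeries (z : ℝ) :
    Summable fun k : ℕ => ((2 * k + 1 : ℕ) : ℝ) * z ^ (2 * k) / Real.Gamma (k + 3 / 2) :=
  summable_div_Gamma_add_three_halves (C := 2) (w := 4 * z ^ 2) fun k => by
    have h : ((2 * k + 1 : ℕ) : ℝ) ≤ 2 * 4 ^ k := by
      have := (Nat.lt_two_pow_self (n := 2 * k + 1)).le
      rw [pow_succ, pow_mul] at this
      exact_mod_cast this.trans (by norm_num [mul_comm])
    rw [abs_mul, Nat.abs_cast, abs_pow, pow_mul, sq_abs, mul_pow, ← mul_assoc]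
    gcongr

lemma tsum_deriv_erfSeries (z : ℝ) :
    ∑' k : ℕ, ((2 * k + 1 : ℕ) : ℝ) * z ^ (2 * k) / Real.Gamma (k + 3 / 2)
      = 2 / √π + 2 * z * erfSeries z := by
  rw [(summable_deriv_erfSeries z).tsum_eq_zero_add, erfSeries, ← tsum_mul_left]
  have hΓ : Real.Gamma (3 / 2) = √π / 2 := by
    rw [show (3 / 2 : ℝ) = 1 / 2 + 1 by norm_num, Real.Gamma_add_one (by norm_num),
      Real.Gamma_one_half_eq]
    ring
  congr 1
  · simp [hΓ]
  · congr 1 with k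
    have hk : (k : ℝ) + 3 / 2 ≠ 0 := by positivity
    have hΓk := (Real.Gamma_pos_of_pos (by positivity : (0:ℝ) < k + 3 / 2)).ne'
    push_cast
    rw [show (k + 1 : ℝ) + 3 / 2 = (k + 3 / 2) + 1 by ring, Real.Gamma_add_one hk]
    field_simp
    ring

lemma hasDerivAt_erfSeries (z : ℝ) : HasDerivAt erfSeries (2 / √π + 2 * z * erfSeries z) z := by
  set R := |z| + 1
  rw [← tsum_deriv_erfSeries]
  refine hasDerivAt_tsum_of_isPreconnected (summable_deriv_erfSeries R) Metric.isOpen_ball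
    (convex_ball 0 R).isPreconnected
    (g := fun (k : ℕ) (y : ℝ) => y ^ (2 * k + 1) / Real.Gamma (k + 3 / 2))
    (g' := fun (k : ℕ) (y : ℝ) => ((2 * k + 1 : ℕ) : ℝ) * y ^ (2 * k) / Real.Gamma (k + 3 / 2))
    (fun k y _ => ?_) (fun k y hy => ?_) (y₀ := 0) (y := z) (by simp [R]; positivity)
    (summable_erfSeries 0) (by simp [R])
  · simpa using (hasDerivAt_pow (2 * k + 1) y).div_const (Real.Gamma (k + 3 / 2))
  · have hyR : |y| ≤ R := by simpa using (mem_ball_zero_iff.mp hy).le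
    have hΓ := Real.Gamma_pos_of_pos (by positivity : (0:ℝ) < k + 3 / 2)
    rw [Real.norm_eq_abs, abs_div, abs_of_pos hΓ, abs_mul, abs_pow, Nat.abs_cast]
    gcongr

lemma erfSeries_eq_exp_mul_erf (z : ℝ) : erfSeries z = Real.exp (z ^ 2) * erf z := by
  set h : ℝ → ℝ := fun y => Real.exp (-y ^ 2) * erfSeries y - erf y
  have hderiv (y : ℝ) : HasDerivAt h 0 y := by
    have hexp : HasDerivAt (fun y : ℝ => Real.exp (-y ^ 2)) (Real.exp (-y ^ 2) * -(2 * y)) y := by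
      simpa using ((hasDerivAt_pow 2 y).neg).exp
    exact ((hexp.mul (hasDerivAt_erfSeries y)).sub (hasDerivAt_erf y)).congr_deriv (by ring)
  have h0 : h z = 0 := by
    rw [is_const_of_deriv_eq_zero (fun y => (hderiv y).differentiableAt)
      (fun y => (hderiv y).deriv) z 0]
    simp [h, erfSeries, erf_zero]
  have : Real.exp (-z ^ 2) * erfSeries z = erf z := sub_eq_zero.mp h0
  rw [← this, ← mul_assoc, ← Real.exp_add, add_neg_cancel, Real.exp_zero, one_mul]

section ParitySplit

variable {b y : ℝ}

lemma hasSum_neg_pow_div_Gamma_mul_regIncBeta_even (hb : 0 < b) (hy₀ : 0 ≤ y) (hy₁ : y ≤ 1)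
    (z : ℝ) :
    HasSum (fun k : ℕ => (-z) ^ (2 * k) / Real.Gamma (((2 * k : ℕ) : ℝ) / 2 + 1) *
        regIncBeta (1 - y) b ((1 + ((2 * k : ℕ) : ℝ)) / 2))
      (Real.exp (z ^ 2) - ∑' k : ℕ, (z ^ 2) ^ k / k ! * regIncBeta y (k + 1 / 2) b) := by
  have hI (k : ℕ) := regIncBeta_one_sub (a := k + 1 / 2) (by positivity) hb hy₀ hy₁
  have hsum : Summable fun k : ℕ => (z ^ 2) ^ k / k ! * regIncBeta y (k + 1 / 2) b :=
    (Real.summable_pow_div_factorial (z ^ 2)).of_nonneg_of_le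
      (fun k => mul_nonneg (by positivity) (regIncBeta_nonneg (by positivity) hb hy₀ hy₁))
      (fun k => mul_le_of_le_one_right (by positivity)
        (regIncBeta_le_one (by positivity) hb hy₀ hy₁))
  rw [Real.exp_eq_exp_ℝ]
  refine ((NormedSpace.expSeries_div_hasSum_exp (z ^ 2)).sub hsum.hasSum).congr_fun fun k => ?_
  rw [show (1 + ((2 * k : ℕ) : ℝ)) / 2 = (k : ℝ) + 1 / 2 by push_cast; ring, hI,
    show ((2 * k : ℕ) : ℝ) / 2 + 1 = (k : ℝ) + 1 by push_cast; ring, Real.Gamma_nat_eq_factorial,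
    pow_mul, neg_sq]
  ring

lemma hasSum_neg_pow_div_Gamma_mul_regIncBeta_odd (hb : 0 < b) (hy₀ : 0 ≤ y) (hy₁ : y ≤ 1)
    (z : ℝ) :
    HasSum (fun k : ℕ => (-z) ^ (2 * k + 1) / Real.Gamma (((2 * k + 1 : ℕ) : ℝ) / 2 + 1) *
        regIncBeta (1 - y) b ((1 + ((2 * k + 1 : ℕ) : ℝ)) / 2))
      (-(Real.exp (z ^ 2) * erf z) +
        ∑' k : ℕ, z * ((z ^ 2) ^ k / Real.Gamma (k + 3 / 2)) * regIncBeta y (k + 1) b) := by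
  have hI (k : ℕ) := regIncBeta_one_sub (a := k + 1) (by positivity) hb hy₀ hy₁
  have hsum : Summable fun k : ℕ => z * ((z ^ 2) ^ k / Real.Gamma (k + 3 / 2)) *
      regIncBeta y (k + 1) b := by
    refine (summable_div_Gamma_add_three_halves (C := |z|) (w := z ^ 2)
      (f := fun k => z * (z ^ 2) ^ k * regIncBeta y (k + 1) b) fun k => ?_).congr fun k => by ring
    rw [abs_mul, abs_mul, abs_of_nonneg (by positivity : (0:ℝ) ≤ (z ^ 2) ^ k),
      abs_of_nonneg (regIncBeta_nonneg (by positivity) hb hy₀ hy₁)]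
    exact mul_le_of_le_one_right (by positivity) (regIncBeta_le_one (by positivity) hb hy₀ hy₁)
  rw [← erfSeries_eq_exp_mul_erf]
  refine ((summable_erfSeries z).hasSum.neg.add hsum.hasSum).congr_fun fun k => ?_
  rw [show (1 + ((2 * k + 1 : ℕ) : ℝ)) / 2 = (k : ℝ) + 1 by push_cast; ring, hI,
    show ((2 * k + 1 : ℕ) : ℝ) / 2 + 1 = (k : ℝ) + 3 / 2 by push_cast; ring,
    Odd.neg_pow (odd_two_mul_add_one k), pow_succ, pow_mul]
  ring

lemma hasSum_neg_pow_div_Gamma_mul_regIncBeta (hb : 0 < b) (hy₀ : 0 ≤ y) (hy₁ : y ≤ 1) (z : ℝ) :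
    HasSum (fun j : ℕ => (-z) ^ j / Real.Gamma ((j : ℝ) / 2 + 1) *
        regIncBeta (1 - y) b ((1 + (j : ℝ)) / 2))
      (Real.exp (z ^ 2) - ∑' k : ℕ, (z ^ 2) ^ k / k ! * regIncBeta y (k + 1 / 2) b +
        (-(Real.exp (z ^ 2) * erf z) +
          ∑' k : ℕ, z * ((z ^ 2) ^ k / Real.Gamma (k + 3 / 2)) * regIncBeta y (k + 1) b)) :=
  HasSum.even_add_odd (f := fun j : ℕ => (-z) ^ j / Real.Gamma ((j : ℝ) / 2 + 1) *
      regIncBeta (1 - y) b ((1 + (j : ℝ)) / 2))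
    (hasSum_neg_pow_div_Gamma_mul_regIncBeta_even hb hy₀ hy₁ z)
    (hasSum_neg_pow_div_Gamma_mul_regIncBeta_odd hb hy₀ hy₁ z)

end ParitySplit

theorem Rnt_series_rep_general (n x δ : ℝ) (hn : 0 < n)
    (y : ℝ) (hy : y = x^2 / (n + x^2)) :
    Rnt n x δ =
      (1/2) * Real.exp (-δ^2/2) *
        ∑' j : ℕ, (-δ / Real.sqrt 2) ^ j / Real.Gamma ((j : ℝ)/2 + 1) *
          regIncBeta (1 - y) (n/2) ((1 + (j : ℝ))/2) := by
  have hy₀ : 0 ≤ y := hy ▸ by positivity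
  have hy₁ : y ≤ 1 := by rw [hy, div_le_one (by positivity)]; linarith
  have hz : (δ / √2) ^ 2 = δ ^ 2 / 2 := by rw [div_pow, Real.sq_sqrt zero_le_two]
  have hsum :=
    hasSum_neg_pow_div_Gamma_mul_regIncBeta (b := n / 2) (by positivity) hy₀ hy₁ (δ / √2)
  have hexp : Real.exp (-(δ / √2) ^ 2) * Real.exp ((δ / √2) ^ 2) = 1 := by
    rw [← Real.exp_add, neg_add_cancel, Real.exp_zero]
  rw [Rnt, Pnt, Qnt, ← hy]
  simp only [neg_div]
  rw [hsum.tsum_eq, ← hz, erf]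
  linear_combination (-1 / 2 * erfc (δ / √2)) * hexp

theorem Rnt_series_rep (n x δ : ℝ) (hn : 0 < n) (hx : 0 < x)
    (y : ℝ) (hy : y = x^2 / (n + x^2)) :
    Rnt n x δ =
      (1/2) * Real.exp (-δ^2/2) *
        ∑' j : ℕ, (-δ / Real.sqrt 2) ^ j / Real.Gamma ((j : ℝ)/2 + 1) *
          regIncBeta (1 - y) (n/2) ((1 + (j : ℝ))/2) :=
  Rnt_series_rep_general n x δ hn y hy
end
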